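/- arXiv:1803.02654 — 4 statements merged into one kernel-verified Lean document; each statement's English description precedes it below -/
import Mathlib

section
/- Let (X,d) be a metric space, g a doubling dimension function, and suppose there exist constants 0 < c₁ < 1 < c₂ and r₀ > 0 such that c₁ g(r) ≤ H^g(B(x,r)) ≤ c₂ g(r) for all x ∈ X and 0 < r < r₀. Let G be a countable family of pairwise disjoint balls in X of radii less than r₀/15. Then H^g(⋃_{B∈G} 15B) ≤ C · H^g(⋃_{B∈G} B) for a constant C depending only on c₁, c₂ and the doubling constant λ of g. -/
open Metric Set Filter MeasureTheory ENNReal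

/-- A dimension function: left-continuous, non-decreasing on `[0,∞)`,
nonnegative, with `f(r) → 0` as `r → 0⁺`. -/
def IsDimFun (f : ℝ → ℝ) : Prop :=
  MonotoneOn f (Set.Ici 0) ∧ (∀ x ∈ Set.Ici (0:ℝ), 0 ≤ f x) ∧
  (∀ x > (0:ℝ), Filter.Tendsto f (nhdsWithin x (Set.Iio x)) (nhds (f x))) ∧
  Filter.Tendsto f (nhdsWithin 0 (Set.Ioi 0)) (nhds 0)

/-- Hausdorff measure with gauge `f`, defined via countable covers by balls:
`H^f(E) = lim_{ρ→0} inf { Σ f(r(B_i)) : {B_i} a ρ-cover of E by balls }`. -/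
noncomputable def hausdorffGauge {X : Type*} [MetricSpace X] (f : ℝ → ℝ) (E : Set X) : ℝ≥0∞ :=
  ⨆ (ρ : ℝ) (_ : 0 < ρ),
    ⨅ (c : ℕ → X × ℝ) (_ : ∀ i, (c i).2 < ρ) (_ : E ⊆ ⋃ i, Metric.ball (c i).1 (c i).2),
      ∑' i, ENNReal.ofReal (f (c i).2)

noncomputable def hgInf {X : Type*} [MetricSpace X] (f : ℝ → ℝ) (E : Set X) (ρ : ℝ) : ℝ≥0∞ :=
  ⨅ (c : ℕ → X × ℝ) (_ : ∀ i, (c i).2 < ρ) (_ : E ⊆ ⋃ i, Metric.ball (c i).1 (c i).2),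
    ∑' i, ENNReal.ofReal (f (c i).2)

lemma hausdorffGauge_def {X : Type*} [MetricSpace X] (f : ℝ → ℝ) (E : Set X) :
    hausdorffGauge f E = ⨆ (ρ : ℝ) (_ : 0 < ρ), hgInf f E ρ := rfl

lemma hgInf_le_cost {X : Type*} [MetricSpace X] (f : ℝ → ℝ) (E : Set X) (ρ : ℝ)
    (c : ℕ → X × ℝ) (h1 : ∀ i, (c i).2 < ρ) (h2 : E ⊆ ⋃ i, Metric.ball (c i).1 (c i).2) :
    hgInf f E ρ ≤ ∑' i, ENNReal.ofReal (f (c i).2) :=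
  iInf_le_of_le c (iInf_le_of_le h1 (iInf_le _ h2))

lemma hgInf_anti {X : Type*} [MetricSpace X] (f : ℝ → ℝ) (E : Set X) {ρ ρ' : ℝ} (h : ρ ≤ ρ') :
    hgInf f E ρ' ≤ hgInf f E ρ := by
  refine le_iInf fun c => le_iInf fun h1 => le_iInf fun h2 => ?_
  exact hgInf_le_cost f E ρ' c (fun i => lt_of_lt_of_le (h1 i) h) h2

lemma hgInf_mono {X : Type*} [MetricSpace X] (f : ℝ → ℝ) {E E' : Set X} (h : E ⊆ E') (ρ : ℝ) :
    hgInf f E ρ ≤ hgInf f E' ρ :=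
  le_iInf fun c => le_iInf fun h1 => le_iInf fun h2 => hgInf_le_cost f E ρ c h1 (h.trans h2)

lemma hgInf_le_hausdorffGauge {X : Type*} [MetricSpace X] (f : ℝ → ℝ) (E : Set X)
    {ρ : ℝ} (hρ : 0 < ρ) : hgInf f E ρ ≤ hausdorffGauge f E := by
  rw [hausdorffGauge_def]
  exact le_iSup_of_le ρ (le_iSup_of_le hρ le_rfl)

lemma hausdorffGauge_eq_iSup_nat {X : Type*} [MetricSpace X] (f : ℝ → ℝ) (E : Set X) :
    hausdorffGauge f E = ⨆ n : ℕ, hgInf f E (1 / (n + 1)) := by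
  rw [hausdorffGauge_def]
  apply le_antisymm
  · refine iSup₂_le fun ρ hρ => ?_
    obtain ⟨n, hn⟩ := exists_nat_one_div_lt hρ
    exact (hgInf_anti f E hn.le).trans (le_iSup (fun n : ℕ => hgInf f E (1 / (n + 1))) n)
  · refine iSup_le fun n => le_iSup_of_le (1 / (n + 1 : ℝ)) (le_iSup_of_le (by positivity) le_rfl)

lemma hgInf_monotone_nat {X : Type*} [MetricSpace X] (f : ℝ → ℝ) (E : Set X) :
    Monotone fun n : ℕ => hgInf f E (1 / (n + 1)) := by
  intro n m hnm
  refine hgInf_anti f E ?_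
  apply one_div_le_one_div_of_le (by positivity)
  have : (n : ℝ) ≤ m := Nat.cast_le.mpr hnm
  linarith

lemma hgInf_tendsto {X : Type*} [MetricSpace X] (f : ℝ → ℝ) (E : Set X) :
    Tendsto (fun n : ℕ => hgInf f E (1 / (n + 1))) atTop (nhds (hausdorffGauge f E)) := by
  rw [hausdorffGauge_eq_iSup_nat]
  exact tendsto_atTop_iSup (hgInf_monotone_nat f E)

lemma hgInf_iUnion_le {X : Type*} [MetricSpace X] (f : ℝ → ℝ) (E : ℕ → Set X) (ρ : ℝ)
    (hρ : 0 < ρ) :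
    hgInf f (⋃ i, E i) ρ ≤ ∑' i, hgInf f (E i) ρ := by
  refine ENNReal.le_of_forall_pos_le_add fun ε hε hfin => ?_
  obtain ⟨δ, hδ0, hδsum⟩ := ENNReal.exists_pos_sum_of_countable (ε := ε)
    (by exact_mod_cast hε.ne') ℕ
  have hterm : ∀ i, hgInf f (E i) ρ < hgInf f (E i) ρ + δ i := fun i =>
    ENNReal.lt_add_right (ne_top_of_le_ne_top hfin.ne (ENNReal.le_tsum i))
      (by exact_mod_cast (hδ0 i).ne')
  have hex : ∀ i, ∃ c : ℕ → X × ℝ, (∀ j, (c j).2 < ρ) ∧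
      (E i ⊆ ⋃ j, Metric.ball (c j).1 (c j).2) ∧
      ∑' j, ENNReal.ofReal (f (c j).2) < hgInf f (E i) ρ + δ i := by
    intro i
    have h := hterm i
    rw [hgInf] at h
    simp only [iInf_lt_iff] at h
    obtain ⟨c, h1, h2, h3⟩ := h
    exact ⟨c, h1, h2, h3⟩
  choose c hc1 hc2 hc3 using hex
  set e : ℕ ≃ ℕ × ℕ := (Denumerable.eqv (ℕ × ℕ)).symm with he
  set C : ℕ → X × ℝ := fun j => c (e j).1 (e j).2 with hC
  have hcov : (⋃ i, E i) ⊆ ⋃ j, Metric.ball (C j).1 (C j).2 := by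
    intro x hx
    obtain ⟨i, hi⟩ := mem_iUnion.mp hx
    obtain ⟨j, hj⟩ := mem_iUnion.mp (hc2 i hi)
    refine mem_iUnion.mpr ⟨e.symm (i, j), ?_⟩
    simpa [hC, he, mem_ball] using hj
  calc hgInf f (⋃ i, E i) ρ ≤ ∑' j, ENNReal.ofReal (f (C j).2) :=
        hgInf_le_cost f _ ρ C (fun j => hc1 _ _) hcov
    _ = ∑' p : ℕ × ℕ, ENNReal.ofReal (f (c p.1 p.2).2) := by
        exact e.tsum_eq (fun p => ENNReal.ofReal (f (c p.1 p.2).2))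
    _ = ∑' i, ∑' j, ENNReal.ofReal (f (c i j).2) := ENNReal.tsum_prod (f := fun i j => ENNReal.ofReal (f (c i j).2))
    _ ≤ ∑' i, (hgInf f (E i) ρ + δ i) := ENNReal.tsum_le_tsum fun i => (hc3 i).le
    _ = (∑' i, hgInf f (E i) ρ) + ∑' i, (δ i : ℝ≥0∞) := ENNReal.tsum_add
    _ ≤ (∑' i, hgInf f (E i) ρ) + ε := add_le_add le_rfl hδsum.le

lemma hausdorffGauge_iUnion_le {X : Type*} [MetricSpace X] (f : ℝ → ℝ) (E : ℕ → Set X) :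
    hausdorffGauge f (⋃ i, E i) ≤ ∑' i, hausdorffGauge f (E i) := by
  rw [hausdorffGauge_def]
  refine iSup₂_le fun ρ hρ => ?_
  refine (hgInf_iUnion_le f E ρ hρ).trans ?_
  exact ENNReal.tsum_le_tsum fun i => hgInf_le_hausdorffGauge f (E i) hρ

theorem stmt9 {X : Type*} [MetricSpace X] (g : ℝ → ℝ) (hg : IsDimFun g)
    (lam : ℝ) (hlam : 1 < lam) (hdouble : ∀ x > (0:ℝ), g (2 * x) < lam * g x)
    (c₁ c₂ r₀ : ℝ) (hc₁ : 0 < c₁) (hc₁1 : c₁ < 1) (hc₂ : 1 < c₂) (hr₀ : 0 < r₀)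
    (hball : ∀ (x : X) (r : ℝ), 0 < r → r < r₀ →
      ENNReal.ofReal (c₁ * g r) ≤ hausdorffGauge g (Metric.ball x r) ∧
      hausdorffGauge g (Metric.ball x r) ≤ ENNReal.ofReal (c₂ * g r)) :
    ∃ C : ℝ, 0 < C ∧
      ∀ b : ℕ → X × ℝ, (∀ i, 0 < (b i).2 ∧ (b i).2 < r₀ / 15) →
        (Pairwise fun i j =>
          Disjoint (Metric.ball (b i).1 (b i).2) (Metric.ball (b j).1 (b j).2)) →
        hausdorffGauge g (⋃ i, Metric.ball (b i).1 (15 * (b i).2)) ≤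
          ENNReal.ofReal C * hausdorffGauge g (⋃ i, Metric.ball (b i).1 (b i).2) := by
  classical
  obtain ⟨hmono, hnonneg, hleft, hzero⟩ := hg
  have hlam0 : (0:ℝ) < lam := lt_trans one_pos hlam
  have hgpos : ∀ s : ℝ, 0 < s → 0 < g s := by
    intro s hs
    by_contra h
    push_neg at h
    have h2 := hdouble s hs
    have h3 : (0:ℝ) ≤ g (2 * s) := hnonneg (2 * s) (Set.mem_Ici.mpr (by positivity))
    nlinarith
  have hg0 : g 0 = 0 := by
    have h1 : (0:ℝ) ≤ g 0 := hnonneg 0 Set.self_mem_Ici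
    have h2 : g 0 ≤ 0 := by
      refine ge_of_tendsto hzero ?_
      filter_upwards [self_mem_nhdsWithin] with x hx
      exact hmono Set.self_mem_Ici (Set.mem_Ici.mpr (le_of_lt hx)) (le_of_lt hx)
    linarith
  have h15 : ∀ s : ℝ, 0 < s → g (15 * s) ≤ lam ^ 4 * g s := by
    intro s hs
    have h16 : g (15 * s) ≤ g (16 * s) :=
      hmono (Set.mem_Ici.mpr (by positivity)) (Set.mem_Ici.mpr (by positivity)) (by linarith)
    have a1 : g (16 * s) < lam * g (8 * s) := by
      have := hdouble (8 * s) (by positivity)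
      rwa [show 2 * (8 * s) = 16 * s by ring] at this
    have a2 : g (8 * s) < lam * g (4 * s) := by
      have := hdouble (4 * s) (by positivity)
      rwa [show 2 * (4 * s) = 8 * s by ring] at this
    have a3 : g (4 * s) < lam * g (2 * s) := by
      have := hdouble (2 * s) (by positivity)
      rwa [show 2 * (2 * s) = 4 * s by ring] at this
    have a4 : g (2 * s) < lam * g s := by
      have := hdouble s hs
      exact this
    nlinarith [mul_lt_mul_of_pos_left a2 hlam0, mul_lt_mul_of_pos_left a3 (by positivity : (0:ℝ) < lam * lam), mul_lt_mul_of_pos_left a4 (by positivity : (0:ℝ) < lam * lam * lam)]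
  refine ⟨c₂ * lam ^ 4 / c₁, by positivity, ?_⟩
  intro b hb hdisj
  -- Step A : bound the large union
  have hA : hausdorffGauge g (⋃ i, Metric.ball (b i).1 (15 * (b i).2)) ≤
      ENNReal.ofReal (c₂ * lam ^ 4 / c₁) * ∑' i, ENNReal.ofReal (c₁ * g ((b i).2)) := by
    refine (hausdorffGauge_iUnion_le g _).trans ?_
    rw [← ENNReal.tsum_mul_left]
    refine ENNReal.tsum_le_tsum fun i => ?_
    have hri := (hb i).1
    have hri2 := (hb i).2
    have h1 : hausdorffGauge g (Metric.ball (b i).1 (15 * (b i).2)) ≤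
        ENNReal.ofReal (c₂ * g (15 * (b i).2)) :=
      (hball _ _ (by positivity) (by linarith)).2
    refine h1.trans ?_
    rw [← ENNReal.ofReal_mul (by positivity)]
    apply ENNReal.ofReal_le_ofReal
    have heq : c₂ * lam ^ 4 / c₁ * (c₁ * g ((b i).2)) = c₂ * (lam ^ 4 * g ((b i).2)) := by
      field_simp
    rw [heq]
    exact mul_le_mul_of_nonneg_left (h15 _ hri) (by linarith)
  -- Step B : lower bound for the small union
  suffices hB : ∑' i, ENNReal.ofReal (c₁ * g ((b i).2)) ≤
      hausdorffGauge g (⋃ i, Metric.ball (b i).1 ((b i).2)) by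
    exact hA.trans (mul_le_mul_right hB _)
  rw [ENNReal.tsum_eq_iSup_sum]
  refine iSup_le fun s => ?_
  -- key inequality with the shrunken balls
  have key : ∀ ε : ℝ, 0 < ε → (∀ i ∈ s, ε < (b i).2) →
      ∑ i ∈ s, ENNReal.ofReal (c₁ * g ((b i).2 - ε)) ≤
        hausdorffGauge g (⋃ i, Metric.ball (b i).1 ((b i).2)) := by
    intro ε hε hεs
    have step1 : ∑ i ∈ s, ENNReal.ofReal (c₁ * g ((b i).2 - ε)) ≤
        ∑ i ∈ s, hausdorffGauge g (Metric.ball (b i).1 ((b i).2 - ε)) := by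
      refine Finset.sum_le_sum fun i hi => ?_
      have h1 : 0 < (b i).2 - ε := by linarith [hεs i hi]
      have h2 : (b i).2 - ε < r₀ := by linarith [(hb i).2, hr₀]
      exact (hball _ _ h1 h2).1
    refine step1.trans ?_
    -- sum of measures of shrunken balls ≤ measure of union
    have htend2 : Tendsto
        (fun n : ℕ => ∑ i ∈ s, hgInf g (Metric.ball (b i).1 ((b i).2 - ε)) (1 / (n + 1)))
        atTop (nhds (∑ i ∈ s, hausdorffGauge g (Metric.ball (b i).1 ((b i).2 - ε)))) :=
      tendsto_finset_sum _ fun i _ => hgInf_tendsto g _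
    refine le_of_tendsto htend2 ?_
    obtain ⟨n₀, hn₀⟩ := exists_nat_one_div_lt (half_pos hε)
    filter_upwards [eventually_ge_atTop n₀] with n hn
    have hρpos : (0:ℝ) < 1 / (n + 1) := by positivity
    have hρle : 1 / (n + 1 : ℝ) ≤ ε / 2 := by
      refine le_trans ?_ hn₀.le
      apply one_div_le_one_div_of_le (by positivity)
      have : (n₀ : ℝ) ≤ n := Nat.cast_le.mpr hn
      linarith
    set ρ : ℝ := 1 / (n + 1 : ℝ) with hρ
    refine le_trans ?_ (hgInf_le_hausdorffGauge g (⋃ i, Metric.ball (b i).1 ((b i).2)) hρpos)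
    -- core combinatorial estimate
    refine le_iInf fun c => le_iInf fun h1 => le_iInf fun h2 => ?_
    set ci : ℕ → ℕ → X × ℝ := fun i j =>
      if (Metric.ball (c j).1 (c j).2 ∩ Metric.ball (b i).1 ((b i).2 - ε)).Nonempty
      then c j else ((b i).1, 0) with hci
    have hstep : ∀ i ∈ s, hgInf g (Metric.ball (b i).1 ((b i).2 - ε)) ρ ≤
        ∑' j, ENNReal.ofReal (g ((ci i j).2)) := by
      intro i hi
      refine hgInf_le_cost g _ ρ (ci i) ?_ ?_
      · intro j
        simp only [hci]
        split_ifs with h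
        · exact h1 j
        · exact hρpos
      · intro x hx
        have hx2 : x ∈ ⋃ j, Metric.ball (c j).1 (c j).2 :=
          h2 (mem_iUnion.mpr ⟨i, Metric.ball_subset_ball (by linarith [hεs i hi]) hx⟩)
        obtain ⟨j, hj⟩ := mem_iUnion.mp hx2
        refine mem_iUnion.mpr ⟨j, ?_⟩
        have hne : (Metric.ball (c j).1 (c j).2 ∩ Metric.ball (b i).1 ((b i).2 - ε)).Nonempty :=
          ⟨x, hj, hx⟩
        simp only [hci, if_pos hne]
        exact hj
    calc ∑ i ∈ s, hgInf g (Metric.ball (b i).1 ((b i).2 - ε)) ρ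
        ≤ ∑ i ∈ s, ∑' j, ENNReal.ofReal (g ((ci i j).2)) := Finset.sum_le_sum hstep
      _ = ∑' j, ∑ i ∈ s, ENNReal.ofReal (g ((ci i j).2)) :=
          (Summable.tsum_finsetSum fun i _ => ENNReal.summable).symm
      _ ≤ ∑' j, ENNReal.ofReal (g ((c j).2)) := by
          refine ENNReal.tsum_le_tsum fun j => ?_
          by_cases hex : ∃ i₀ ∈ s,
            (Metric.ball (c j).1 (c j).2 ∩ Metric.ball (b i₀).1 ((b i₀).2 - ε)).Nonempty
          · obtain ⟨i₀, hi₀s, hP⟩ := hex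
            have huniq : ∀ i ∈ s,
                (Metric.ball (c j).1 (c j).2 ∩ Metric.ball (b i).1 ((b i).2 - ε)).Nonempty →
                i = i₀ := by
              intro i hi hPi
              by_contra hne
              obtain ⟨p, hp1, hp2⟩ := hPi
              obtain ⟨q, hq1, hq2⟩ := hP
              have hrad : (c j).2 < ρ := h1 j
              have hdpq : dist p q < ε := by
                have d1 : dist p (c j).1 < (c j).2 := mem_ball.mp hp1
                have d2 : dist q (c j).1 < (c j).2 := mem_ball.mp hq1
                calc dist p q ≤ dist p (c j).1 + dist q (c j).1 := dist_triangle_right _ _ _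
                  _ < ρ + ρ := by linarith
                  _ ≤ ε := by linarith
              have hq_i : q ∈ Metric.ball (b i).1 ((b i).2) := by
                have hpd : dist p (b i).1 < (b i).2 - ε := mem_ball.mp hp2
                have : dist q (b i).1 ≤ dist q p + dist p (b i).1 := dist_triangle _ _ _
                rw [mem_ball]
                rw [dist_comm] at hdpq
                linarith
              have hq_i₀ : q ∈ Metric.ball (b i₀).1 ((b i₀).2) :=
                Metric.ball_subset_ball (by linarith) hq2
              exact Set.disjoint_left.mp (hdisj hne) hq_i hq_i₀
            calc ∑ i ∈ s, ENNReal.ofReal (g ((ci i j).2))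
                ≤ ∑ i ∈ s, (if i = i₀ then ENNReal.ofReal (g ((c j).2)) else 0) := by
                  refine Finset.sum_le_sum fun i hi => ?_
                  simp only [hci]
                  split_ifs with hPi hii₀ hii₀
                  · exact le_rfl
                  · exact absurd (huniq i hi hPi) hii₀
                  · simp [hg0]
                  · simp [hg0]
              _ = ENNReal.ofReal (g ((c j).2)) := by
                  rw [Finset.sum_ite_eq' s i₀]
                  simp [hi₀s]
          · have : ∀ i ∈ s, ENNReal.ofReal (g ((ci i j).2)) = 0 := by
              intro i hi
              have hno : ¬ (Metric.ball (c j).1 (c j).2 ∩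
                  Metric.ball (b i).1 ((b i).2 - ε)).Nonempty :=
                fun hPi => hex ⟨i, hi, hPi⟩
              simp only [hci, if_neg hno]
              simp [hg0]
            rw [Finset.sum_congr rfl this]
            simp
  -- take the limit ε → 0⁺
  have htend : Tendsto (fun ε : ℝ => ∑ i ∈ s, ENNReal.ofReal (c₁ * g ((b i).2 - ε)))
      (nhdsWithin 0 (Set.Ioi 0)) (nhds (∑ i ∈ s, ENNReal.ofReal (c₁ * g ((b i).2)))) := by
    refine tendsto_finset_sum _ fun i _ => ?_
    have h1 : Tendsto (fun ε : ℝ => (b i).2 - ε) (nhdsWithin 0 (Set.Ioi 0))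
        (nhdsWithin ((b i).2) (Set.Iio ((b i).2))) := by
      rw [tendsto_nhdsWithin_iff]
      constructor
      · have : Tendsto (fun ε : ℝ => (b i).2 - ε) (nhds 0) (nhds ((b i).2 - 0)) :=
          tendsto_const_nhds.sub tendsto_id
        simpa using this.mono_left nhdsWithin_le_nhds
      · filter_upwards [self_mem_nhdsWithin] with ε hε
        exact sub_lt_self _ (Set.mem_Ioi.mp hε)
    have h2 := (hleft _ (hb i).1).comp h1
    exact ENNReal.tendsto_ofReal (h2.const_mul c₁)
  refine le_of_tendsto htend ?_
  have hev : ∀ᶠ ε in nhdsWithin (0:ℝ) (Set.Ioi 0), ∀ i ∈ s, ε < (b i).2 := by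
    rw [eventually_all_finset]
    intro i _
    exact eventually_nhdsWithin_of_eventually_nhds (eventually_lt_nhds (hb i).1)
  filter_upwards [self_mem_nhdsWithin, hev] with ε hε hεs
  exact key ε hε hεs
end

section
/- Let (Υ_j)_{j∈ℕ} be a sequence of positive reals with Υ_j → 0, let g be a doubling dimension function with doubling constant λ, and let f be a dimension function with f(r)/g(r) → ∞ as r → 0. Fix 0 ≤ κ < 1 and define Υ̃_j := g⁻¹((f(Υ_j)/g(Υ_j)^κ)^{1/(1−κ)}), where g⁻¹ is a (generalized) inverse of g. Then Υ_j/Υ̃_j → 0 as j → ∞; in particular, for every N ∈ ℕ there exists J such that Υ_j < Υ̃_j/2^N for all j ≥ J. -/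
open Metric Set Filter MeasureTheory ENNReal

theorem stmt10 (f g ginv : ℝ → ℝ) (lam κ : ℝ) (hlam : 1 < lam)
    (hκ : 0 ≤ κ) (hκ1 : κ < 1)
    (hf : IsDimFun f) (hg : IsDimFun g) (hfgκ : IsDimFun (fun r => f r / g r ^ κ))
    (hdouble : ∀ x > (0:ℝ), g (2 * x) < lam * g x)
    (hgmono : StrictMonoOn g (Set.Ici 0)) (hgcont : ContinuousOn g (Set.Ici 0))
    (hginv1 : ∀ x ≥ (0:ℝ), ginv (g x) = x) (hginv2 : ∀ y ≥ (0:ℝ), g (ginv y) = y)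
    (hratio : Tendsto (fun r => f r / g r) (nhdsWithin 0 (Set.Ioi 0)) atTop)
    (Υ : ℕ → ℝ) (hΥpos : ∀ j, 0 < Υ j) (hΥ : Tendsto Υ atTop (nhds 0)) :
    Tendsto (fun j => Υ j / ginv ((f (Υ j) / g (Υ j) ^ κ) ^ (1 / (1 - κ)))) atTop (nhds 0) ∧
    ∀ N : ℕ, ∃ J : ℕ, ∀ j ≥ J,
      Υ j < ginv ((f (Υ j) / g (Υ j) ^ κ) ^ (1 / (1 - κ))) / 2 ^ N := by
  have h1κ : 0 < 1 - κ := by linarith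
  set p : ℝ := 1 / (1 - κ) with hp_def
  have hp1 : 1 ≤ p := by
    rw [hp_def, le_div_iff₀ h1κ]; linarith
  have hlam0 : 0 < lam := by linarith
  have hg00 : 0 ≤ g 0 := hg.2.1 0 (Set.mem_Ici.mpr le_rfl)
  have hg0le : g 0 ≤ 0 := by
    refine ge_of_tendsto hg.2.2.2 ?_
    filter_upwards [self_mem_nhdsWithin] with x hx
    exact hg.1 (Set.mem_Ici.mpr le_rfl) (Set.mem_Ici.mpr (le_of_lt (Set.mem_Ioi.mp hx))) (le_of_lt (Set.mem_Ioi.mp hx))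
  have hg0 : g 0 = 0 := le_antisymm hg0le hg00
  have hg1 : 0 < g 1 := by
    have := hgmono (Set.mem_Ici.mpr le_rfl) (Set.mem_Ici.mpr zero_le_one) zero_lt_one
    linarith
  have hdpow : ∀ N : ℕ, ∀ x > (0:ℝ), g (2 ^ N * x) ≤ lam ^ N * g x := by
    intro N
    induction N with
    | zero => intro x hx; simp
    | succ n ih =>
      intro x hx
      have h2 : (2:ℝ) ^ (n+1) * x = 2 * (2 ^ n * x) := by ring
      rw [h2, pow_succ]
      calc g (2 * (2 ^ n * x)) ≤ lam * g (2 ^ n * x) :=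
            le_of_lt (hdouble _ (by positivity))
        _ ≤ lam * (lam ^ n * g x) :=
            mul_le_mul_of_nonneg_left (ih x hx) (le_of_lt hlam0)
        _ = lam ^ n * lam * g x := by ring
  have hΥ' : Tendsto Υ atTop (nhdsWithin 0 (Set.Ioi 0)) :=
    tendsto_nhdsWithin_iff.mpr ⟨hΥ, Filter.Eventually.of_forall fun j => hΥpos j⟩
  have hw : Tendsto (fun j => f (Υ j) / g (Υ j)) atTop atTop := hratio.comp hΥ'
  have hz : Tendsto (fun j => f (Υ j) / g (Υ j) ^ κ) atTop (nhds 0) := hfgκ.2.2.2.comp hΥ'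
  have key : ∀ N : ℕ, ∀ᶠ j in atTop,
      Υ j < ginv ((f (Υ j) / g (Υ j) ^ κ) ^ p) / 2 ^ N := by
    intro N
    have E1 : ∀ᶠ j in atTop, max (lam ^ N) 1 < f (Υ j) / g (Υ j) := hw.eventually_gt_atTop _
    have E2 : ∀ᶠ j in atTop, f (Υ j) / g (Υ j) ^ κ < min 1 (g 1) :=
      hz.eventually_lt_const (lt_min one_pos hg1)
    filter_upwards [E1, E2] with j h1 h2
    set w := f (Υ j) / g (Υ j) with hw_def
    set z := f (Υ j) / g (Υ j) ^ κ with hz_def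
    have hw1 : 1 < w := lt_of_le_of_lt (le_max_right _ _) h1
    have hgpos : 0 < g (Υ j) := by
      rcases lt_or_eq_of_le (hg.2.1 (Υ j) (le_of_lt (hΥpos j))) with h | h
      · exact h
      · exfalso
        have : w = 0 := by rw [hw_def, ← h, _root_.div_zero]
        linarith
    have hfpos : 0 < f (Υ j) := by
      have := (one_lt_div hgpos).mp hw1; linarith
    have hgκ : 0 < g (Υ j) ^ κ := Real.rpow_pos_of_pos hgpos κ
    have hzpos : 0 < z := div_pos hfpos hgκ
    have hz1 : z ≤ 1 := le_of_lt (lt_of_lt_of_le h2 (min_le_left _ _))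
    have hκp : κ * p = p - 1 := by
      rw [hp_def]; field_simp; ring
    have hgp : (0:ℝ) < g (Υ j) ^ p := Real.rpow_pos_of_pos hgpos p
    have hkey : z ^ p = w ^ p * g (Υ j) := by
      rw [hz_def, hw_def, Real.div_rpow hfpos.le hgκ.le, ← Real.rpow_mul hgpos.le,
        hκp, Real.rpow_sub hgpos, Real.rpow_one, Real.div_rpow hfpos.le hgpos.le]
      field_simp
    have hwp : w ≤ w ^ p := by
      have := Real.rpow_le_rpow_of_exponent_le hw1.le hp1
      rwa [Real.rpow_one] at this
    have hy_gt : lam ^ N * g (Υ j) < z ^ p := by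
      rw [hkey]
      have h3 : lam ^ N < w := lt_of_le_of_lt (le_max_left _ _) h1
      have : lam ^ N * g (Υ j) < w * g (Υ j) := mul_lt_mul_of_pos_right h3 hgpos
      nlinarith
    have hy_lt : z ^ p < g 1 := by
      have hle := Real.rpow_le_rpow_of_exponent_ge hzpos hz1 hp1
      rw [Real.rpow_one] at hle
      exact lt_of_le_of_lt hle (lt_of_lt_of_le h2 (min_le_right _ _))
    have hy0 : 0 ≤ z ^ p := (Real.rpow_pos_of_pos hzpos p).le
    obtain ⟨x, hx, hgx⟩ := intermediate_value_Icc zero_le_one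
      (hgcont.mono (Set.Icc_subset_Ici_self))
      (show z ^ p ∈ Set.Icc (g 0) (g 1) from ⟨by rw [hg0]; exact hy0, hy_lt.le⟩)
    have hT : ginv (z ^ p) = x := by rw [← hgx, hginv1 x hx.1]
    rw [hT]
    by_contra hcon
    push_neg at hcon
    have hxle : x ≤ 2 ^ N * Υ j := by
      rw [div_le_iff₀ (by positivity : (0:ℝ) < 2 ^ N)] at hcon
      linarith [hcon]
    have hmono : g x ≤ g (2 ^ N * Υ j) :=
      hg.1 hx.1 (Set.mem_Ici.mpr (mul_pos (by positivity) (hΥpos j)).le) hxle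
    have := hdpow N (Υ j) (hΥpos j)
    rw [hgx] at hmono
    linarith
  constructor
  · rw [Metric.tendsto_atTop]
    intro ε hε
    obtain ⟨N, hN⟩ := exists_pow_lt_of_lt_one hε (by norm_num : (1:ℝ)/2 < 1)
    obtain ⟨J, hJ⟩ := eventually_atTop.mp ((key N).and (key 0))
    refine ⟨J, fun j hj => ?_⟩
    obtain ⟨h1, h2⟩ := hJ j hj
    set T := ginv ((f (Υ j) / g (Υ j) ^ κ) ^ p) with hT_def
    have hT' : Υ j < T := by simpa using h2
    have hTpos : 0 < T := (hΥpos j).trans hT'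
    rw [Real.dist_eq, sub_zero, abs_of_pos (div_pos (hΥpos j) hTpos)]
    have hlt : Υ j / T < (1/2:ℝ) ^ N := by
      rw [div_lt_iff₀ hTpos]
      calc Υ j < T / 2 ^ N := h1
        _ = (1/2:ℝ) ^ N * T := by rw [one_div_pow]; ring
    exact hlt.trans hN
  · intro N
    obtain ⟨J, hJ⟩ := eventually_atTop.mp (key N)
    exact ⟨J, hJ⟩
end

section
/- Let X ⊆ ℝⁿ, let (F_j) be a sequence of subsets satisfying: there exist constants c₃,c₄,r₁ > 0 and 0 ≤ κ < 1 such that c₃ δ^{n(1−κ)} r^{κn} ≤ Lⁿ(B(x,r) ∩ Δ(F_j,δ)) ≤ c₄ δ^{n(1−κ)} r^{κn} for all 0 < r < r₁, 0 < δ < r, j ∈ ℕ, x ∈ F_j. Fix j, a radius r with 2Υ < r < r₁ for some Υ > 0, and a point x₀ ∈ F_j. Let x₁,…,x_t ∈ F_j ∩ B(x₀, r/2) be a maximal collection of points with pairwise distances > 6Υ. Then t ≍ (r/Υ)^{κn}, with implied constants depending only on n, κ, c₃, c₄. -/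
open Metric Set MeasureTheory

theorem stmt11 (n : ℕ) (κ c₃ c₄ : ℝ) (hκ : 0 ≤ κ) (hκ1 : κ < 1)
    (hc₃ : 0 < c₃) (hc₄ : 0 < c₄) :
    ∃ d₁ d₂ : ℝ, 0 < d₁ ∧ 0 < d₂ ∧
      ∀ (F : ℕ → Set (EuclideanSpace ℝ (Fin n))) (r₁ : ℝ), 0 < r₁ →
      (∀ (r δ : ℝ) (j : ℕ) (x : EuclideanSpace ℝ (Fin n)),
        0 < r → r < r₁ → 0 < δ → δ < r → x ∈ F j →
        ENNReal.ofReal (c₃ * δ ^ ((n:ℝ) * (1 - κ)) * r ^ (κ * (n:ℝ))) ≤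
            volume (ball x r ∩ Metric.thickening δ (F j)) ∧
        volume (ball x r ∩ Metric.thickening δ (F j)) ≤
            ENNReal.ofReal (c₄ * δ ^ ((n:ℝ) * (1 - κ)) * r ^ (κ * (n:ℝ)))) →
      ∀ (j : ℕ) (r Υ : ℝ) (x₀ : EuclideanSpace ℝ (Fin n)),
        0 < Υ → 2 * Υ < r → r < r₁ → x₀ ∈ F j →
      ∀ (t : ℕ) (x : Fin t → EuclideanSpace ℝ (Fin n)),
        (∀ i, x i ∈ F j ∩ ball x₀ (r / 2)) →
        (∀ i i', i ≠ i' → 6 * Υ < dist (x i) (x i')) →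
        (∀ y ∈ F j ∩ ball x₀ (r / 2), ∃ i, dist y (x i) ≤ 6 * Υ) →
        d₁ * (r / Υ) ^ (κ * (n:ℝ)) ≤ (t : ℝ) ∧ (t : ℝ) ≤ d₂ * (r / Υ) ^ (κ * (n:ℝ)) := by
  have hfr : Module.finrank ℝ (EuclideanSpace ℝ (Fin n)) = n := finrank_euclideanSpace_fin
  set ω : ENNReal := volume (ball (0 : EuclideanSpace ℝ (Fin n)) 1) with hωdef
  have hωtop : ω ≠ ⊤ :=
    ((measure_mono ball_subset_closedBall).trans_lt measure_closedBall_lt_top).ne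
  have hω0 : ω ≠ 0 := (measure_ball_pos volume _ one_pos).ne'
  set W : ℝ := ω.toReal with hWdef
  have hW0 : 0 < W := ENNReal.toReal_pos hω0 hωtop
  refine ⟨min (c₃ / (7 ^ n * 4 ^ n * W)) (((4:ℝ) ^ n)⁻¹), c₄ / c₃,
    lt_min (by positivity) (by positivity), by positivity, ?_⟩
  intro F r₁ hr₁ hvol j r Υ x₀ hΥ h2Υ hrr₁ hx₀ t x hxF hsep hmax
  set a : ℝ := (n:ℝ) * (1 - κ) with hadef
  set b : ℝ := κ * (n:ℝ) with hbdef
  have ha0 : 0 ≤ a := by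
    have : (0:ℝ) ≤ (n:ℝ) := Nat.cast_nonneg n
    nlinarith
  have hb0 : 0 ≤ b := by
    have : (0:ℝ) ≤ (n:ℝ) := Nat.cast_nonneg n
    nlinarith
  have hbn : b ≤ (n:ℝ) := by
    have : (0:ℝ) ≤ (n:ℝ) := Nat.cast_nonneg n
    nlinarith
  have hr0 : 0 < r := by linarith
  have hΥr2 : Υ < r / 2 := by linarith
  -- positivity of various powers
  have hP : (0:ℝ) < (Υ/2) ^ a := Real.rpow_pos_of_pos (by linarith) a
  have hUp : (0:ℝ) < Υ ^ b := Real.rpow_pos_of_pos hΥ b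
  have hUa : (0:ℝ) < Υ ^ a := Real.rpow_pos_of_pos hΥ a
  have hRp : (0:ℝ) < r ^ b := Real.rpow_pos_of_pos hr0 b
  have hQ : (0:ℝ) < (4:ℝ) ^ b := Real.rpow_pos_of_pos (by norm_num) b
  have h4 : (4:ℝ) ^ b ≤ 4 ^ n := by
    rw [← Real.rpow_natCast 4 n]
    exact Real.rpow_le_rpow_of_exponent_le (by norm_num) hbn
  have hrΥ : (r / Υ) ^ b = r ^ b / Υ ^ b := Real.div_rpow hr0.le hΥ.le b
  have hΥn : Υ ^ n = Υ ^ a * Υ ^ b := by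
    rw [← Real.rpow_natCast Υ n, ← Real.rpow_add hΥ]
    congr 1
    simp [hadef, hbdef]; ring
  -- ===== Upper bound =====
  have hub : (t:ℝ) ≤ c₄ / c₃ * (r / Υ) ^ b := by
    set S : Fin t → Set (EuclideanSpace ℝ (Fin n)) :=
      fun i => ball (x i) Υ ∩ Metric.thickening (Υ/2) (F j) with hSdef
    have hSmeas : ∀ i, MeasurableSet (S i) := fun i =>
      measurableSet_ball.inter isOpen_thickening.measurableSet
    have hSdisj : Pairwise (Function.onFun Disjoint S) := by
      intro i i' hii
      have hd := hsep i i' hii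
      exact ((ball_disjoint_ball (by linarith)).mono inter_subset_left inter_subset_left)
    have hU : volume (⋃ i, S i) = ∑' i, volume (S i) := measure_iUnion hSdisj hSmeas
    have hsub : (⋃ i, S i) ⊆ ball x₀ r ∩ Metric.thickening (Υ/2) (F j) := by
      refine iUnion_subset fun i => inter_subset_inter ?_ subset_rfl
      refine ball_subset_ball' ?_
      have hxi : dist (x i) x₀ < r / 2 := mem_ball.mp (hxF i).2
      linarith
    have hupper := (hvol r (Υ/2) j x₀ hr0 hrr₁ (by linarith) (by linarith) hx₀).2
    have hlowerS : ∀ i, ENNReal.ofReal (c₃ * (Υ/2) ^ a * Υ ^ b) ≤ volume (S i) := fun i =>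
      (hvol Υ (Υ/2) j (x i) hΥ (by linarith) (by linarith) (by linarith) (hxF i).1).1
    have key1 : (t : ENNReal) * ENNReal.ofReal (c₃ * (Υ/2) ^ a * Υ ^ b) ≤
        ENNReal.ofReal (c₄ * (Υ/2) ^ a * r ^ b) := by
      calc (t : ENNReal) * ENNReal.ofReal (c₃ * (Υ/2) ^ a * Υ ^ b)
          = ∑' _ : Fin t, ENNReal.ofReal (c₃ * (Υ/2) ^ a * Υ ^ b) := by
            simp [tsum_fintype, Finset.sum_const, nsmul_eq_mul]
        _ ≤ ∑' i, volume (S i) := ENNReal.tsum_le_tsum hlowerS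
        _ = volume (⋃ i, S i) := hU.symm
        _ ≤ volume (ball x₀ r ∩ Metric.thickening (Υ/2) (F j)) := measure_mono hsub
        _ ≤ _ := hupper
    have key1' : (t:ℝ) * (c₃ * (Υ/2) ^ a * Υ ^ b) ≤ c₄ * (Υ/2) ^ a * r ^ b := by
      rw [← ENNReal.ofReal_natCast, ← ENNReal.ofReal_mul (Nat.cast_nonneg t)] at key1
      exact (ENNReal.ofReal_le_ofReal_iff (by positivity)).mp key1
    have h2 : (t:ℝ) * (c₃ * Υ ^ b) ≤ c₄ * r ^ b := by
      refine le_of_mul_le_mul_right ?_ hP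
      nlinarith [key1']
    rw [hrΥ, div_mul_div_comm, le_div_iff₀ (by positivity)]
    linarith [h2]
  refine ⟨?_, hub⟩
  -- ===== Lower bound =====
  by_cases hcase : Υ < r / 4
  · -- main case
    have hcov : ball x₀ (r/4) ∩ Metric.thickening Υ (F j) ⊆
        ⋃ i, closedBall (x i) (7 * Υ) := by
      rintro z ⟨hz1, hz2⟩
      obtain ⟨y, hyF, hzy⟩ := Metric.mem_thickening_iff.mp hz2
      have hz1' : dist z x₀ < r / 4 := mem_ball.mp hz1
      have hy : y ∈ ball x₀ (r / 2) := by
        rw [mem_ball]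
        have h1 : dist y x₀ ≤ dist y z + dist z x₀ := dist_triangle y z x₀
        have h2 : dist y z = dist z y := dist_comm y z
        linarith
      obtain ⟨i, hi⟩ := hmax y ⟨hyF, hy⟩
      refine mem_iUnion.mpr ⟨i, mem_closedBall.mpr ?_⟩
      have h3 : dist z (x i) ≤ dist z y + dist y (x i) := dist_triangle z y (x i)
      linarith
    have hlow := (hvol (r/4) Υ j x₀ (by linarith) (by linarith) hΥ hcase hx₀).1
    have hballs : ∀ i, volume (closedBall (x i) (7 * Υ)) =
        ENNReal.ofReal ((7 * Υ) ^ n) * ω := by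
      intro i
      rw [Measure.addHaar_closedBall volume (x i) (by positivity), hfr, hωdef]
    have key2 : ENNReal.ofReal (c₃ * Υ ^ a * (r/4) ^ b) ≤
        (t : ENNReal) * (ENNReal.ofReal ((7 * Υ) ^ n) * ω) := by
      calc ENNReal.ofReal (c₃ * Υ ^ a * (r/4) ^ b)
          ≤ volume (ball x₀ (r/4) ∩ Metric.thickening Υ (F j)) := hlow
        _ ≤ volume (⋃ i, closedBall (x i) (7 * Υ)) := measure_mono hcov
        _ ≤ ∑' i, volume (closedBall (x i) (7 * Υ)) := measure_iUnion_le _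
        _ = (t : ENNReal) * (ENNReal.ofReal ((7 * Υ) ^ n) * ω) := by
            simp [hballs, tsum_fintype, Finset.sum_const, nsmul_eq_mul]
    have key2' : c₃ * Υ ^ a * (r/4) ^ b ≤ (t:ℝ) * ((7 * Υ) ^ n * W) := by
      rw [← ENNReal.ofReal_toReal hωtop, ← hWdef, ← ENNReal.ofReal_mul (by positivity),
        ← ENNReal.ofReal_natCast t, ← ENNReal.ofReal_mul (Nat.cast_nonneg t)] at key2
      exact (ENNReal.ofReal_le_ofReal_iff (by positivity)).mp key2
    -- arithmetic
    have hr4 : (r/4) ^ b = r ^ b / 4 ^ b := Real.div_rpow hr0.le (by norm_num) b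
    have h7 : (7 * Υ) ^ n = 7 ^ n * (Υ ^ a * Υ ^ b) := by rw [mul_pow, hΥn]
    rw [hr4, h7] at key2'
    -- multiply by 4^b and cancel Υ^a:
    have h1 : c₃ * r ^ b ≤ (t:ℝ) * (7 ^ n * Υ ^ b * W) * 4 ^ b := by
      refine le_of_mul_le_mul_right ?_ hUa
      have e : c₃ * Υ ^ a * (r ^ b / 4 ^ b) * 4 ^ b = c₃ * r ^ b * Υ ^ a := by
        field_simp
      have hm := mul_le_mul_of_nonneg_right key2' hQ.le
      rw [e] at hm
      calc c₃ * r ^ b * Υ ^ a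
          ≤ (t:ℝ) * (7 ^ n * (Υ ^ a * Υ ^ b) * W) * 4 ^ b := hm
        _ = (t:ℝ) * (7 ^ n * Υ ^ b * W) * 4 ^ b * Υ ^ a := by ring
    have h2 : c₃ * r ^ b ≤ (t:ℝ) * ((7 ^ n * 4 ^ n * W) * Υ ^ b) := by
      have hnn : (0:ℝ) ≤ (t:ℝ) * (7 ^ n * Υ ^ b * W) := by positivity
      have hm2 := mul_le_mul_of_nonneg_left h4 hnn
      calc c₃ * r ^ b ≤ (t:ℝ) * (7 ^ n * Υ ^ b * W) * 4 ^ b := h1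
        _ ≤ (t:ℝ) * (7 ^ n * Υ ^ b * W) * 4 ^ n := hm2
        _ = (t:ℝ) * ((7 ^ n * 4 ^ n * W) * Υ ^ b) := by ring
    have hfin : c₃ / (7 ^ n * 4 ^ n * W) * (r / Υ) ^ b ≤ (t:ℝ) := by
      rw [hrΥ, div_mul_div_comm, div_le_iff₀ (by positivity)]
      linarith [h2]
    calc min (c₃ / (7 ^ n * 4 ^ n * W)) (((4:ℝ) ^ n)⁻¹) * (r / Υ) ^ b
        ≤ c₃ / (7 ^ n * 4 ^ n * W) * (r / Υ) ^ b := by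
          exact mul_le_mul_of_nonneg_right (min_le_left _ _) (by positivity)
      _ ≤ (t:ℝ) := hfin
  · -- case Υ ≥ r/4 : t ≥ 1
    have hx₀ball : x₀ ∈ F j ∩ ball x₀ (r / 2) := ⟨hx₀, mem_ball_self (by linarith)⟩
    obtain ⟨i, -⟩ := hmax x₀ hx₀ball
    have ht1 : (1:ℝ) ≤ (t:ℝ) := by exact_mod_cast i.pos
    have hle4 : r / Υ ≤ 4 := by
      rw [div_le_iff₀ hΥ]; linarith
    have hpow : (r / Υ) ^ b ≤ 4 ^ n := by
      calc (r / Υ) ^ b ≤ (4:ℝ) ^ b :=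
            Real.rpow_le_rpow (by positivity) hle4 hb0
        _ ≤ 4 ^ n := h4
    calc min (c₃ / (7 ^ n * 4 ^ n * W)) (((4:ℝ) ^ n)⁻¹) * (r / Υ) ^ b
        ≤ ((4:ℝ) ^ n)⁻¹ * 4 ^ n := by
          exact mul_le_mul (min_le_right _ _) hpow (by positivity) (by positivity)
      _ = 1 := by field_simp
      _ ≤ (t:ℝ) := ht1
end

section
/- Let (X,d) be a compact metric space with H^s(X) = 1 for some s > 0, and suppose there are constants 0 < c₁ < 1 < c₂ and r₀ > 0 with c₁rˢ ≤ H^s(B(x,r)) ≤ c₂rˢ for all x ∈ X, 0 < r < r₀. Let (F_j) be a sequence of subsets satisfying the local scaling property with exponent κ ∈ [0,1), and let τ > 1/(s−κs). Then for any sequence (φ_j) of isometries of X, the set Λ := {x : x ∈ Δ(φ_j(F_j), j^{−τ}) for infinitely many j} satisfies H^t(Λ) = 0 for every t > κs + 1/τ; in particular dim_H(Λ) ≤ κs + 1/τ. -/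
open Metric Set Filter MeasureTheory
open scoped ENNReal NNReal Topology

set_option maxHeartbeats 2000000 in
theorem stmt17 {X : Type*} [MetricSpace X] [CompactSpace X] [MeasurableSpace X] [BorelSpace X]
    (s : ℝ) (hs : 0 < s) (hXfull : μH[s] (Set.univ : Set X) = 1)
    (c₁ c₂ r₀ : ℝ) (hc₁ : 0 < c₁) (hc₁1 : c₁ < 1) (hc₂ : 1 < c₂) (hr₀ : 0 < r₀)
    (hball : ∀ (x : X) (r : ℝ), 0 < r → r < r₀ →
      ENNReal.ofReal (c₁ * r ^ s) ≤ μH[s] (ball x r) ∧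
      μH[s] (ball x r) ≤ ENNReal.ofReal (c₂ * r ^ s))
    (κ : ℝ) (hκ : 0 ≤ κ) (hκ1 : κ < 1)
    (F : ℕ → Set X) (c₃ c₄ r₁ : ℝ) (hc₃ : 0 < c₃) (hc₄ : 0 < c₄) (hr₁ : 0 < r₁)
    (hLSP : ∀ (r δ : ℝ) (j : ℕ) (x : X), 0 < r → r < r₁ → 0 < δ → δ < r → x ∈ F j →
      ENNReal.ofReal (c₃ * δ ^ (s * (1 - κ)) * r ^ (κ * s)) ≤
          μH[s] (ball x r ∩ Metric.thickening δ (F j)) ∧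
      μH[s] (ball x r ∩ Metric.thickening δ (F j)) ≤
          ENNReal.ofReal (c₄ * δ ^ (s * (1 - κ)) * r ^ (κ * s)))
    (τ : ℝ) (hτ : 1 / (s - κ * s) < τ)
    (φ : ℕ → X → X) (hφ : ∀ j, Isometry (φ j)) :
    (∀ t : ℝ, κ * s + 1 / τ < t →
      μH[t] (⋂ G : ℕ, ⋃ j, ⋃ _ : G ≤ j,
        Metric.thickening ((j:ℝ) ^ (-τ)) (φ j '' F j)) = 0) ∧
    dimH (⋂ G : ℕ, ⋃ j, ⋃ _ : G ≤ j,
        Metric.thickening ((j:ℝ) ^ (-τ)) (φ j '' F j)) ≤ ENNReal.ofReal (κ * s + 1 / τ) := by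
  classical
  -- basic positivity facts
  have hκs : 0 ≤ κ * s := mul_nonneg hκ hs.le
  have hsκ : 0 < s * (1 - κ) := mul_pos hs (by linarith)
  have hsκ' : 0 < s - κ * s := by nlinarith
  have hτ0 : 0 < τ := lt_trans (one_div_pos.2 hsκ') hτ
  set ρ : ℝ := r₁ / 4 with hρdef
  have hρ0 : 0 < ρ := by positivity
  -- finite cover of X by balls of radius ρ
  obtain ⟨Z₀, -, hZ₀fin, hZ₀cov⟩ :=
    finite_cover_balls_of_compact (isCompact_univ (X := X)) hρ0
  set Z : Finset X := hZ₀fin.toFinset with hZdef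
  have hZcov : ∀ y : X, ∃ z ∈ Z, y ∈ ball z ρ := by
    intro y
    have := hZ₀cov (mem_univ y)
    simp only [mem_iUnion] at this
    obtain ⟨z, hz, hyz⟩ := this
    exact ⟨z, by simpa [hZdef] using hz, hyz⟩
  set M : ℕ := Z.card with hMdef
  set C₇ : ℝ := M * c₄ / c₃ * (6 * ρ) ^ (κ * s) with hC₇def
  have hC₇ : 0 ≤ C₇ := by positivity
  -- Step A : measure of thickening is small
  have stepA : ∀ (j : ℕ) (δ : ℝ), 0 < δ → δ < ρ →
      μH[s] (Metric.thickening (δ/4) (F j)) ≤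
        (M : ℝ≥0∞) * ENNReal.ofReal (c₄ * (δ/4) ^ (s * (1 - κ)) * (3 * ρ) ^ (κ * s)) := by
    intro j δ hδ0 hδρ
    have hsub : Metric.thickening (δ/4) (F j) ⊆
        ⋃ z ∈ Z, ball z ρ ∩ Metric.thickening (δ/4) (F j) := by
      intro y hy
      obtain ⟨z, hz, hyz⟩ := hZcov y
      exact mem_biUnion hz ⟨hyz, hy⟩
    refine le_trans (measure_mono hsub) (le_trans (measure_biUnion_finset_le Z _) ?_)
    have hterm : ∀ z ∈ Z, μH[s] (ball z ρ ∩ Metric.thickening (δ/4) (F j)) ≤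
        ENNReal.ofReal (c₄ * (δ/4) ^ (s * (1 - κ)) * (3 * ρ) ^ (κ * s)) := by
      intro z _
      rcases Set.eq_empty_or_nonempty (ball z ρ ∩ Metric.thickening (δ/4) (F j)) with he | hne
      · rw [he, measure_empty]; exact zero_le
      obtain ⟨w, hwball, hwthick⟩ := hne
      obtain ⟨f, hf, hwf⟩ := Metric.mem_thickening_iff.1 hwthick
      have hsub2 : ball z ρ ∩ Metric.thickening (δ/4) (F j) ⊆
          ball f (3 * ρ) ∩ Metric.thickening (δ/4) (F j) := by
        rintro w' ⟨hw', hw'2⟩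
        refine ⟨?_, hw'2⟩
        rw [mem_ball] at *
        have h1 : dist w' f ≤ dist w' z + dist z w + dist w f := dist_triangle4 w' z w f
        have h2 : dist z w = dist w z := dist_comm z w
        have : dist w' f < ρ + ρ + δ/4 := by rw [h2] at h1; linarith
        linarith
      refine le_trans (measure_mono hsub2) ?_
      exact (hLSP (3 * ρ) (δ/4) j f (by linarith) (by rw [hρdef]; linarith)
        (by linarith) (by linarith) hf).2
    refine le_trans (Finset.sum_le_sum hterm) ?_
    rw [Finset.sum_const, nsmul_eq_mul, hMdef]
  -- Step B : cardinality bound for separated sets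
  have stepB : ∀ (j : ℕ) (δ : ℝ), 0 < δ → δ < ρ → ∀ S : Finset X, ↑S ⊆ F j →
      (∀ x ∈ S, ∀ y ∈ S, x ≠ y → δ ≤ dist x y) → (S.card : ℝ) ≤ C₇ * δ ^ (-(κ * s)) := by
    intro j δ hδ0 hδρ S hSF hsep
    set L : ℝ := c₃ * (δ/4) ^ (s * (1 - κ)) * (δ/2) ^ (κ * s) with hLdef
    set U : ℝ := c₄ * (δ/4) ^ (s * (1 - κ)) * (3 * ρ) ^ (κ * s) with hUdef
    have hL0 : 0 < L := by positivity
    have hU0 : 0 < U := by positivity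
    set B : X → Set X := fun x => ball x (δ/2) ∩ Metric.thickening (δ/4) (F j) with hBdef
    have hlow : ∀ x ∈ S, ENNReal.ofReal L ≤ μH[s] (B x) := by
      intro x hx
      exact (hLSP (δ/2) (δ/4) j x (by linarith) (by rw [hρdef] at hδρ; linarith)
        (by linarith) (by linarith) (hSF hx)).1
    have hdisj : (↑S : Set X).PairwiseDisjoint B := by
      intro x hx y hy hxy
      refine Set.disjoint_left.2 ?_
      rintro a ⟨ha1, -⟩ ⟨ha2, -⟩
      rw [mem_ball] at ha1 ha2
      have : dist x y ≤ dist a x + dist a y := dist_triangle_left x y a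
      have := hsep x hx y hy hxy
      linarith
    have hmeas : ∀ x ∈ S, MeasurableSet (B x) := fun x _ =>
      (isOpen_ball.inter isOpen_thickening).measurableSet
    have hsum : (S.card : ℝ≥0∞) * ENNReal.ofReal L ≤ (M : ℝ≥0∞) * ENNReal.ofReal U := by
      calc (S.card : ℝ≥0∞) * ENNReal.ofReal L = ∑ x ∈ S, ENNReal.ofReal L := by
            rw [Finset.sum_const, nsmul_eq_mul]
        _ ≤ ∑ x ∈ S, μH[s] (B x) := Finset.sum_le_sum hlow
        _ = μH[s] (⋃ x ∈ S, B x) := (measure_biUnion_finset hdisj hmeas).symm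
        _ ≤ μH[s] (Metric.thickening (δ/4) (F j)) := by
            refine measure_mono ?_
            intro a ha
            simp only [mem_iUnion] at ha
            obtain ⟨x, -, -, ha2⟩ := ha
            exact ha2
        _ ≤ (M : ℝ≥0∞) * ENNReal.ofReal U := stepA j δ hδ0 hδρ
    have hreal : (S.card : ℝ) * L ≤ (M : ℝ) * U := by
      rw [← ENNReal.ofReal_natCast S.card, ← ENNReal.ofReal_natCast M,
        ← ENNReal.ofReal_mul (by positivity), ← ENNReal.ofReal_mul (by positivity)] at hsum
      exact (ENNReal.ofReal_le_ofReal_iff (by positivity)).1 hsum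
    have hδks : (0:ℝ) < δ ^ (κ * s) := Real.rpow_pos_of_pos hδ0 _
    have key : (M : ℝ) * U = C₇ * δ ^ (-(κ * s)) * L := by
      have e1 : (6 * ρ) ^ (κ * s) * δ ^ (-(κ * s)) * (δ/2) ^ (κ * s) = (3 * ρ) ^ (κ * s) := by
        rw [Real.rpow_neg hδ0.le]
        rw [show (6 * ρ) ^ (κ * s) * (δ ^ (κ * s))⁻¹ * (δ/2) ^ (κ * s)
            = (6 * ρ) ^ (κ * s) * (δ/2) ^ (κ * s) * (δ ^ (κ * s))⁻¹ from by ring]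
        rw [← Real.mul_rpow (by positivity) (by positivity)]
        rw [show (6 * ρ) * (δ/2) = (3 * ρ) * δ from by ring]
        rw [Real.mul_rpow (by positivity) hδ0.le]
        field_simp
      rw [hUdef, hLdef, hC₇def, ← e1]
      field_simp
    rw [key] at hreal
    exact le_of_mul_le_mul_right hreal hL0
  -- Step C : existence of δ-nets of controlled cardinality
  have stepC : ∀ (j : ℕ) (δ : ℝ), 0 < δ → δ < ρ → ∃ S : Finset X, ↑S ⊆ F j ∧
      (∀ z ∈ F j, ∃ x ∈ S, dist z x < δ) ∧ (S.card : ℝ) ≤ C₇ * δ ^ (-(κ * s)) := by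
    intro j δ hδ0 hδρ
    set P : ℕ → Prop := fun n => ∃ S : Finset X, ↑S ⊆ F j ∧
      (∀ x ∈ S, ∀ y ∈ S, x ≠ y → δ ≤ dist x y) ∧ S.card = n with hPdef
    set n₀ : ℕ := ⌈C₇ * δ ^ (-(κ * s))⌉₊ with hn₀def
    have hPbound : ∀ n, P n → n ≤ n₀ := by
      rintro n ⟨S, hSF, hsep, hcard⟩
      have := stepB j δ hδ0 hδρ S hSF hsep
      rw [hcard] at this
      exact_mod_cast this.trans (Nat.le_ceil _)
    have hP0 : P 0 := ⟨∅, by simp, by simp, rfl⟩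
    have hPN : P (Nat.findGreatest P n₀) := Nat.findGreatest_spec (Nat.zero_le n₀) hP0
    obtain ⟨S, hSF, hsep, hcard⟩ := hPN
    refine ⟨S, hSF, ?_, ?_⟩
    · intro z hz
      by_contra hcon
      push_neg at hcon
      have hznS : z ∉ S := by
        intro hzS
        have := hcon z hzS
        simp at this
        linarith
      have hP1 : P (Nat.findGreatest P n₀ + 1) := by
        refine ⟨insert z S, ?_, ?_, ?_⟩
        · rw [Finset.coe_insert]
          exact Set.insert_subset hz hSF
        · intro x hx y hy hxy
          rcases Finset.mem_insert.1 hx with rfl | hx'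
          · rcases Finset.mem_insert.1 hy with rfl | hy'
            · exact absurd rfl hxy
            · exact hcon y hy'
          · rcases Finset.mem_insert.1 hy with rfl | hy'
            · rw [dist_comm]; exact hcon x hx'
            · exact hsep x hx' y hy' hxy
        · rw [Finset.card_insert_of_notMem hznS, hcard]
      exact Nat.findGreatest_is_greatest (Nat.lt_succ_self _) (hPbound _ hP1) hP1
    · exact stepB j δ hδ0 hδρ S hSF hsep
  -- Step D : efficient covers of the thickened images
  have stepD : ∀ t : ℝ, 0 < t → ∀ (j : ℕ) (δ : ℝ), 0 < δ → δ < ρ → ∃ u : ℕ → Set X,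
      (Metric.thickening δ (φ j '' F j) ⊆ ⋃ n, u n) ∧
      (∀ n, EMetric.diam (u n) ≤ ENNReal.ofReal (4 * δ)) ∧
      (∑' n, EMetric.diam (u n) ^ t ≤
        ENNReal.ofReal (C₇ * δ ^ (-(κ * s)) * (4 * δ) ^ t)) := by
    intro t ht0 j δ hδ0 hδρ
    obtain ⟨S, hSF, hnet, hcard⟩ := stepC j δ hδ0 hδρ
    set l : List X := S.toList with hldef
    refine ⟨fun n => if h : n < l.length then ball (φ j (l.get ⟨n, h⟩)) (2 * δ) else ∅,
      ?_, ?_, ?_⟩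
    · intro y hy
      obtain ⟨w, hw, hyw⟩ := Metric.mem_thickening_iff.1 hy
      obtain ⟨z, hz, rfl⟩ := hw
      obtain ⟨x, hxS, hzx⟩ := hnet z hz
      have hxl : x ∈ l := by rw [hldef]; exact Finset.mem_toList.2 hxS
      obtain ⟨n, hn⟩ := List.mem_iff_get.1 hxl
      rw [mem_iUnion]
      refine ⟨n.1, ?_⟩
      rw [dif_pos n.2]
      have : dist y (φ j (l.get ⟨n.1, n.2⟩)) ≤ dist y (φ j z) + dist (φ j z) (φ j x) := by
        rw [show l.get ⟨n.1, n.2⟩ = x from hn]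
        exact dist_triangle _ _ _
      rw [(hφ j).dist_eq] at this
      rw [mem_ball]
      rw [show l.get ⟨n.1, n.2⟩ = x from hn]
      have h2 : dist y (φ j x) ≤ dist y (φ j z) + dist z x := by
        rw [show l.get ⟨n.1, n.2⟩ = x from hn] at this
        exact this
      linarith
    · intro n
      by_cases h : n < l.length
      · beta_reduce
        rw [dif_pos h]
        refine Metric.ediam_le_of_forall_dist_le ?_
        intro a ha b hb
        rw [mem_ball] at ha hb
        have := dist_triangle_right a b (φ j (l.get ⟨n, h⟩))
        linarith
      · beta_reduce
        rw [dif_neg h]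
        simp [EMetric.diam]
    · have hzero : ∀ n ∉ Finset.range l.length,
          EMetric.diam (if h : n < l.length then
            ball (φ j (l.get ⟨n, h⟩)) (2 * δ) else ∅) ^ t = 0 := by
        intro n hn
        rw [Finset.mem_range, not_lt] at hn
        rw [dif_neg (not_lt.2 hn)]
        simp [EMetric.diam, ENNReal.zero_rpow_of_pos ht0]
      rw [tsum_eq_sum hzero]
      have hterm : ∀ n ∈ Finset.range l.length,
          EMetric.diam (if h : n < l.length then
            ball (φ j (l.get ⟨n, h⟩)) (2 * δ) else ∅) ^ t ≤
          ENNReal.ofReal ((4 * δ) ^ t) := by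
        intro n hn
        rw [Finset.mem_range] at hn
        rw [dif_pos hn]
        have hd : EMetric.diam (ball (φ j (l.get ⟨n, hn⟩)) (2 * δ)) ≤
            ENNReal.ofReal (4 * δ) := by
          refine Metric.ediam_le_of_forall_dist_le ?_
          intro a ha b hb
          rw [mem_ball] at ha hb
          have := dist_triangle_right a b (φ j (l.get ⟨n, hn⟩))
          linarith
        calc EMetric.diam (ball (φ j (l.get ⟨n, hn⟩)) (2 * δ)) ^ t
            ≤ ENNReal.ofReal (4 * δ) ^ t := ENNReal.rpow_le_rpow hd ht0.le
          _ = ENNReal.ofReal ((4 * δ) ^ t) :=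
              ENNReal.ofReal_rpow_of_pos (by linarith)
      refine le_trans (Finset.sum_le_sum hterm) ?_
      rw [Finset.sum_const, Finset.card_range, nsmul_eq_mul]
      have hlen : l.length = S.card := Finset.length_toList S
      rw [hlen]
      rw [ENNReal.ofReal_mul (by positivity)]
      refine mul_le_mul_left ?_ _
      rw [← ENNReal.ofReal_natCast S.card]
      exact ENNReal.ofReal_le_ofReal hcard
  -- main measure statement
  have main : ∀ t : ℝ, κ * s + 1 / τ < t →
      μH[t] (⋂ G : ℕ, ⋃ j, ⋃ _ : G ≤ j,
        Metric.thickening ((j:ℝ) ^ (-τ)) (φ j '' F j)) = 0 := by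
    intro t ht
    have hτinv : 0 < 1 / τ := one_div_pos.2 hτ0
    have ht0 : 0 < t := by nlinarith
    set p : ℝ := τ * (t - κ * s) with hpdef
    have hp1 : 1 < p := by
      have h1 : 1 / τ < t - κ * s := by linarith
      have h2 : τ * (1 / τ) < τ * (t - κ * s) := (mul_lt_mul_iff_right₀ hτ0).2 h1
      rw [mul_one_div, div_self hτ0.ne'] at h2
      linarith
    set C₉ : ℝ := C₇ * 4 ^ t with hC₉def
    have hC₉ : 0 ≤ C₉ := by positivity
    set g : ℕ → ℝ≥0∞ := fun j => ENNReal.ofReal (C₉ * (j:ℝ) ^ (-p)) with hgdef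
    have hgsummable : Summable (fun j : ℕ => C₉ * (j:ℝ) ^ (-p)) :=
      (Real.summable_nat_rpow.2 (by linarith)).mul_left C₉
    have hgnonneg : ∀ n : ℕ, 0 ≤ C₉ * (n:ℝ) ^ (-p) :=
      fun n => mul_nonneg hC₉ (Real.rpow_nonneg (Nat.cast_nonneg n) _)
    have hgne : ∑' j, g j ≠ ⊤ := by
      have h0 : (∑' j, g j) = ENNReal.ofReal (∑' j : ℕ, C₉ * (j:ℝ) ^ (-p)) :=
        (ENNReal.ofReal_tsum_of_nonneg hgnonneg hgsummable).symm
      rw [h0]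
      exact ENNReal.ofReal_ne_top
    have hTail : Tendsto (fun G => ∑' n, g (n + G)) atTop (𝓝 0) :=
      ENNReal.tendsto_sum_nat_add g hgne
    set Q : ℕ → Prop := fun j => 0 < ((j:ℝ)) ^ (-τ) ∧ ((j:ℝ)) ^ (-τ) < ρ with hQdef
    have huu : ∀ j, ∃ u : ℕ → Set X, Q j →
        (Metric.thickening ((j:ℝ) ^ (-τ)) (φ j '' F j) ⊆ ⋃ n, u n) ∧
        (∀ n, EMetric.diam (u n) ≤ ENNReal.ofReal (4 * ((j:ℝ) ^ (-τ)))) ∧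
        (∑' n, EMetric.diam (u n) ^ t ≤
          ENNReal.ofReal (C₇ * ((j:ℝ) ^ (-τ)) ^ (-(κ * s)) * (4 * ((j:ℝ) ^ (-τ))) ^ t)) := by
      intro j
      by_cases h : Q j
      · obtain ⟨u, hu⟩ := stepD t ht0 j _ h.1 h.2
        exact ⟨u, fun _ => hu⟩
      · exact ⟨fun _ => ∅, fun h' => absurd h' h⟩
    choose uu huu1 using huu
    have hδto : Tendsto (fun G : ℕ => ((G:ℝ)) ^ (-τ)) atTop (𝓝 0) :=
      (tendsto_rpow_neg_atTop hτ0).comp tendsto_natCast_atTop_atTop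
    have hev : ∀ᶠ G : ℕ in atTop, 1 ≤ G ∧ ((G:ℝ)) ^ (-τ) < ρ :=
      (eventually_ge_atTop 1).and (hδto.eventually_lt_const hρ0)
    -- monotonicity fact
    have hmono : ∀ G j : ℕ, 1 ≤ G → G ≤ j → ((j:ℝ)) ^ (-τ) ≤ ((G:ℝ)) ^ (-τ) := by
      intro G j hG hGj
      have hG0 : (0:ℝ) < G := by exact_mod_cast hG
      exact Real.rpow_le_rpow_of_nonpos hG0 (by exact_mod_cast hGj) (by linarith)
    have hQj : ∀ G j : ℕ, 1 ≤ G → ((G:ℝ)) ^ (-τ) < ρ → G ≤ j → Q j := by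
      intro G j hG hGρ hGj
      have hj0 : (0:ℝ) < j := by
        have : (1:ℕ) ≤ j := le_trans hG hGj
        exact_mod_cast this
      exact ⟨Real.rpow_pos_of_pos hj0 _, lt_of_le_of_lt (hmono G j hG hGj) hGρ⟩
    set e : ℕ ≃ ℕ × ℕ := (Denumerable.eqv (ℕ × ℕ)).symm with hedef
    set Λ : Set X := ⋂ G : ℕ, ⋃ j, ⋃ _ : G ≤ j,
      Metric.thickening ((j:ℝ) ^ (-τ)) (φ j '' F j) with hΛdef
    have hcovbound : μH[t] Λ ≤ liminf (fun G : ℕ =>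
        ∑' m : ℕ, EMetric.diam (uu (G + (e m).1) (e m).2) ^ t) atTop := by
      refine Measure.hausdorffMeasure_le_liminf_tsum t Λ
        (fun G : ℕ => ENNReal.ofReal (4 * ((G:ℝ)) ^ (-τ)))
        ?_ (fun G m => uu (G + (e m).1) (e m).2) ?_ ?_
      · have : Tendsto (fun G : ℕ => 4 * ((G:ℝ)) ^ (-τ)) atTop (𝓝 (4 * 0)) :=
          hδto.const_mul 4
        rw [mul_zero] at this
        simpa using ENNReal.tendsto_ofReal this
      · filter_upwards [hev] with G hG
        intro m
        have hQ : Q (G + (e m).1) := hQj G _ hG.1 hG.2 (Nat.le_add_right _ _)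
        refine le_trans ((huu1 _ hQ).2.1 (e m).2) (ENNReal.ofReal_le_ofReal ?_)
        have := hmono G (G + (e m).1) hG.1 (Nat.le_add_right _ _)
        linarith
      · filter_upwards [hev] with G hG
        intro y hy
        have hy2 := Set.mem_iInter.1 hy G
        simp only [Set.mem_iUnion] at hy2
        obtain ⟨j, hGj, hyj⟩ := hy2
        have hQ : Q j := hQj G j hG.1 hG.2 hGj
        have := (huu1 j hQ).1 hyj
        rw [Set.mem_iUnion] at this
        obtain ⟨i, hi⟩ := this
        rw [Set.mem_iUnion]
        refine ⟨e.symm (j - G, i), ?_⟩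
        have hee : e (e.symm (j - G, i)) = (j - G, i) := e.apply_symm_apply _
        rw [hee]
        have hj : G + (j - G) = j := Nat.add_sub_cancel' hGj
        simpa [hj] using hi
    have hgeq : ∀ j : ℕ, Q j → 1 ≤ j →
        ENNReal.ofReal (C₇ * ((j:ℝ) ^ (-τ)) ^ (-(κ * s)) * (4 * ((j:ℝ) ^ (-τ))) ^ t)
          = g j := by
      intro j hQ hj
      have hj0 : (0:ℝ) < j := by exact_mod_cast hj
      have h1 : ((j:ℝ) ^ (-τ)) ^ (-(κ * s)) = (j:ℝ) ^ (τ * (κ * s)) := by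
        rw [← Real.rpow_mul hj0.le]
        ring_nf
      have h2 : (4 * ((j:ℝ) ^ (-τ))) ^ t = 4 ^ t * (j:ℝ) ^ (-τ * t) := by
        rw [Real.mul_rpow (by norm_num) (Real.rpow_nonneg hj0.le _),
          ← Real.rpow_mul hj0.le]
      rw [hgdef]
      congr 1
      rw [h1, h2, show C₇ * (j:ℝ) ^ (τ * (κ * s)) * (4 ^ t * (j:ℝ) ^ (-τ * t))
          = C₉ * ((j:ℝ) ^ (τ * (κ * s)) * (j:ℝ) ^ (-τ * t)) from by rw [hC₉def]; ring,
        ← Real.rpow_add hj0, show τ * (κ * s) + -τ * t = -p from by rw [hpdef]; ring]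
    have hliminf2 : liminf (fun G : ℕ =>
        ∑' m : ℕ, EMetric.diam (uu (G + (e m).1) (e m).2) ^ t) atTop ≤
        liminf (fun G => ∑' n, g (n + G)) atTop := by
      refine Filter.liminf_le_liminf ?_
      filter_upwards [hev] with G hG
      have hstep : (∑' m : ℕ, EMetric.diam (uu (G + (e m).1) (e m).2) ^ t)
          = ∑' (n : ℕ) (i : ℕ), EMetric.diam (uu (G + n) i) ^ t := by
        rw [← ENNReal.tsum_prod (f := fun n i => EMetric.diam (uu (G + n) i) ^ t)]
        exact e.tsum_eq (fun q : ℕ × ℕ => EMetric.diam (uu (G + q.1) q.2) ^ t)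
      rw [hstep]
      calc ∑' (n : ℕ) (i : ℕ), EMetric.diam (uu (G + n) i) ^ t
          ≤ ∑' n : ℕ, g (G + n) := by
            refine ENNReal.tsum_le_tsum fun n => ?_
            have hQ : Q (G + n) := hQj G _ hG.1 hG.2 (Nat.le_add_right _ _)
            exact le_of_le_of_eq ((huu1 _ hQ).2.2)
              (hgeq (G + n) hQ (le_trans hG.1 (Nat.le_add_right _ _)))
        _ = ∑' n : ℕ, g (n + G) := tsum_congr fun n => by rw [Nat.add_comm]
    have hfinal : μH[t] Λ ≤ 0 := by
      refine le_trans hcovbound (le_trans hliminf2 ?_)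
      rw [hTail.liminf_eq]
    exact le_zero_iff.1 hfinal
  refine ⟨main, ?_⟩
  refine dimH_le fun d' hd' => ?_
  rcases le_or_gt (d' : ℝ) (κ * s + 1 / τ) with h2 | h2
  · calc (d' : ℝ≥0∞) = ENNReal.ofReal (d' : ℝ) := ENNReal.ofReal_coe_nnreal.symm
      _ ≤ _ := ENNReal.ofReal_le_ofReal h2
  · rw [main d' h2] at hd'
    exact absurd hd' (by simp)
end
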